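/- arXiv:0903.0743 — 12 statements merged into one kernel-verified Lean document; each statement's English description precedes it below -/
import Mathlib

section
/- Let H : F_{q^n} → F_{q^n} be arbitrary, γ, β ∈ F_{q^n} with γ ≠ 0, and define f(x) = Tr(H(x^q - γ^{q-1}·x) + β·x), where Tr is the trace from F_{q^n} to F_q. Then f(x + uγ) - f(x) = u·Tr(βγ) for all x ∈ F_{q^n} and u ∈ F_q; i.e., γ is a Tr(βγ)-linear translator of f. -/
/-- For arbitrary `H : F_{q^n} → F_{q^n}`, `γ ≠ 0`, `β`, the function
`f(x) = Tr(H(x^q - γ^{q-1} x) + β x)` has `γ` as a `Tr(βγ)`-linear translator. -/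
theorem stmt_4 {K L : Type*} [Field K] [Fintype K] [Field L] [Fintype L] [Algebra K L]
    [FiniteDimensional K L]
    (H : L → L) (γ β : L) (hγ : γ ≠ 0)
    (f : L → K)
    (hf : ∀ x : L, f x =
      Algebra.trace K L (H (x ^ Fintype.card K - γ ^ (Fintype.card K - 1) * x) + β * x)) :
    ∀ (x : L) (u : K), f (x + u • γ) - f x = u * Algebra.trace K L (β * γ) := by
  intro x u
  set p := ringChar K with hpdef
  haveI : Fact p.Prime := ⟨CharP.char_is_prime K p⟩
  obtain ⟨n, hp, hq⟩ := FiniteField.card K p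
  haveI : CharP L p := charP_of_injective_algebraMap (algebraMap K L).injective p
  have key : (x + u • γ) ^ Fintype.card K - γ ^ (Fintype.card K - 1) * (x + u • γ)
      = x ^ Fintype.card K - γ ^ (Fintype.card K - 1) * x := by
    have hfrob : (x + u • γ) ^ Fintype.card K
        = x ^ Fintype.card K + (u • γ) ^ Fintype.card K := by
      rw [hq]; exact add_pow_char_pow x (u • γ) p n
    have hu : (u • γ) ^ Fintype.card K = u • γ ^ Fintype.card K := by
      rw [Algebra.smul_def, mul_pow, ← map_pow, FiniteField.pow_card, Algebra.smul_def]
    have hγq : γ ^ (Fintype.card K - 1) * γ = γ ^ Fintype.card K := by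
      rw [← pow_succ, Nat.sub_add_cancel Fintype.card_pos]
    rw [hfrob, hu, mul_add, mul_smul_comm, hγq]
    ring
  have hβ : β * (x + u • γ) = β * x + u • (β * γ) := by
    rw [mul_add, mul_smul_comm]
  rw [hf, hf, key, hβ, map_add, map_add, map_add, map_smul, smul_eq_mul]
  ring
end

section
/- Let γ ∈ F_{q^n} satisfy γ^{q^2 - 1} = -1 and let β ∈ F_{q^n}. Define f(x) = Tr(x^{q+1} + βx). Then f(x + uγ) - f(x) = u·Tr(βγ) for all x ∈ F_{q^n} and u ∈ F_q. -/
section aux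
variable {K L : Type*} [Field K] [Fintype K] [Field L] [Fintype L] [Algebra K L]
    [FiniteDimensional K L]

/-- Frobenius `x ↦ x ^ |K|` is a `K`-algebra equivalence of `L`. -/
noncomputable def frobKL : L ≃ₐ[K] L := by
  classical
  exact AlgEquiv.ofBijective
    { toFun := fun x => x ^ Fintype.card K
      map_one' := one_pow _
      map_mul' := fun a b => mul_pow a b _
      map_zero' := by
        have := Fintype.one_lt_card (α := K)
        exact zero_pow (by omega)
      map_add' := by
        obtain ⟨p, hp⟩ := CharP.exists K
        haveI := hp
        haveI : CharP L p := charP_of_injective_algebraMap (algebraMap K L).injective p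
        obtain ⟨m, hpp, hm⟩ := FiniteField.card K p
        haveI : Fact p.Prime := ⟨hpp⟩
        intro a b
        rw [hm]
        exact add_pow_char_pow a b p m
      commutes' := fun r => by
        simp [← map_pow, FiniteField.pow_card] }
    (Finite.injective_iff_bijective.mp (fun a b hab => by
      have h : (a - b) ^ Fintype.card K = 0 := by
        obtain ⟨p, hp⟩ := CharP.exists K
        haveI := hp
        haveI : CharP L p := charP_of_injective_algebraMap (algebraMap K L).injective p
        obtain ⟨m, hpp, hm⟩ := FiniteField.card K p
        haveI : Fact p.Prime := ⟨hpp⟩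
        rw [hm, sub_pow_char_pow]
        rw [← hm]
        simpa using sub_eq_zero.mpr hab
      have := pow_eq_zero_iff (n := Fintype.card K) (M₀ := L)
        (by have := Fintype.one_lt_card (α := K); omega) |>.mp h
      exact sub_eq_zero.mp this))

lemma frobKL_apply (x : L) : frobKL (K := K) x = x ^ Fintype.card K := rfl

lemma trace_pow_card' (x : L) :
    Algebra.trace K L (x ^ Fintype.card K) = Algebra.trace K L x := by
  rw [← frobKL_apply (K := K) x]
  exact Algebra.trace_eq_of_algEquiv (frobKL (K := K)) x

end aux

/-- Let `n = 4k`, `γ^{q²-1} = -1`, and `f(x) = Tr(x^{q+1} + βx)`. Then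
`f(x + uγ) - f(x) = u·Tr(βγ)` for all `x` and `u`. -/
theorem stmt_6 {K L : Type*} [Field K] [Fintype K] [Field L] [Fintype L] [Algebra K L]
    [FiniteDimensional K L]
    (k : ℕ) (hk : 0 < k) (hn : Module.finrank K L = 4 * k)
    (γ β : L) (hγ : γ ^ (Fintype.card K ^ 2 - 1) = -1)
    (f : L → K)
    (hf : ∀ x : L, f x = Algebra.trace K L (x ^ (Fintype.card K + 1) + β * x)) :
    ∀ (x : L) (u : K), f (x + u • γ) - f x = u * Algebra.trace K L (β * γ) := by
  intro x u
  set q := Fintype.card K with hqdef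
  have hq1 : 1 < q := Fintype.one_lt_card
  have hpos : 1 ≤ q ^ 2 := Nat.one_le_pow _ _ (by omega)
  have hcancel : q ^ 2 - 1 + 1 = q ^ 2 := Nat.sub_add_cancel hpos
  -- γ ^ (q^2) = -γ
  have hγq2 : γ ^ (q ^ 2) = -γ := by
    rw [← hcancel, pow_succ, hγ, neg_one_mul]
  -- trace of γ^(q+1) is zero
  have htγ : Algebra.trace K L (γ ^ (q + 1)) = 0 := by
    have he : (q ^ 2 - 1) + (q + 1) = (q + 1) * q := by
      calc (q ^ 2 - 1) + (q + 1) = (q ^ 2 - 1 + 1) + q := by ring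
        _ = q ^ 2 + q := by rw [hcancel]
        _ = (q + 1) * q := by ring
    have h1 : (γ ^ (q + 1)) ^ q = -γ ^ (q + 1) := by
      rw [← pow_mul, ← he, pow_add, hγ, neg_one_mul]
    have h2 := trace_pow_card' (K := K) (γ ^ (q + 1))
    rw [h1, map_neg] at h2
    by_cases h2K : (2 : K) = 0
    · -- characteristic two: γ^(q+1) is fixed by Frobenius, hence in K
      have h2L : (2 : L) = 0 := by
        have := map_ofNat (algebraMap K L) 2
        rw [← this, h2K, map_zero]
      have hfix : (γ ^ (q + 1)) ^ q = γ ^ (q + 1) := by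
        rw [h1, neg_eq_iff_add_eq_zero, ← two_mul, h2L, zero_mul]
      -- γ^(q+1) is a root of X^q - X, whose roots are exactly the image of K
      classical
      set t := γ ^ (q + 1) with ht
      obtain ⟨s, hs⟩ : ∃ s : K, algebraMap K L s = t := by
        set P : Polynomial L := Polynomial.X ^ q - Polynomial.X with hP
        have hPne : P ≠ 0 := FiniteField.X_pow_card_sub_X_ne_zero L hq1
        have hdeg : P.natDegree = q := FiniteField.X_pow_card_sub_X_natDegree_eq L hq1
        set T : Finset L := Finset.univ.image (algebraMap K L) with hT
        have hTcard : T.card = q := by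
          rw [hT, Finset.card_image_of_injective _ (algebraMap K L).injective,
            Finset.card_univ]
        have hTsub : T ⊆ P.roots.toFinset := by
          intro y hy
          rw [hT, Finset.mem_image] at hy
          obtain ⟨v, _, hv⟩ := hy
          rw [Multiset.mem_toFinset, Polynomial.mem_roots hPne]
          simp only [hP, Polynomial.IsRoot, Polynomial.eval_sub, Polynomial.eval_pow,
            Polynomial.eval_X]
          rw [← hv, ← map_pow, FiniteField.pow_card, sub_self]
        have hcard2 : P.roots.toFinset.card ≤ q := by
          calc P.roots.toFinset.card ≤ Multiset.card P.roots := Multiset.toFinset_card_le _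
            _ ≤ P.natDegree := Polynomial.card_roots' P
            _ = q := hdeg
        have hTeq : T = P.roots.toFinset :=
          Finset.eq_of_subset_of_card_le hTsub (by omega)
        have htmem : t ∈ P.roots.toFinset := by
          rw [Multiset.mem_toFinset, Polynomial.mem_roots hPne]
          simp only [hP, Polynomial.IsRoot, Polynomial.eval_sub, Polynomial.eval_pow,
            Polynomial.eval_X]
          rw [hfix, sub_self]
        rw [← hTeq, hT, Finset.mem_image] at htmem
        obtain ⟨s, _, hs⟩ := htmem
        exact ⟨s, hs⟩
      rw [← hs, Algebra.trace_algebraMap, hn]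
      have : (4 * k) • s = ((4 * k : ℕ) : K) * s := by rw [nsmul_eq_mul]
      rw [this]
      have : ((4 * k : ℕ) : K) = 2 * 2 * (k : K) := by push_cast; ring
      rw [this, h2K]
      ring
    · -- odd characteristic: 2·Tr = 0 and 2 ≠ 0
      have : (2 : K) * Algebra.trace K L (γ ^ (q + 1)) = 0 := by
        linear_combination -h2
      rcases mul_eq_zero.mp this with h | h
      · exact absurd h h2K
      · exact h
  -- cross terms cancel
  have hcross : Algebra.trace K L (x * γ ^ q + γ * x ^ q) = 0 := by
    have h1 : (x * γ ^ q) ^ q = -(γ * x ^ q) := by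
      rw [mul_pow, ← pow_mul, ← pow_two, hγq2]; ring
    have h2 := trace_pow_card' (K := K) (x * γ ^ q)
    rw [h1, map_neg] at h2
    rw [map_add, ← h2]
    ring
  -- expansion
  have hc : (algebraMap K L u) ^ q = algebraMap K L u := by
    rw [← map_pow, FiniteField.pow_card]
  have hfrob : (x + algebraMap K L u * γ) ^ q = x ^ q + (algebraMap K L u) * γ ^ q := by
    rw [← frobKL_apply (K := K), map_add, map_mul, frobKL_apply,
      frobKL_apply, frobKL_apply, hc]
  have hexp : (x + u • γ) ^ (q + 1) + β * (x + u • γ)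
      = (x ^ (q + 1) + β * x) + (u • (x * γ ^ q + γ * x ^ q) + (u * u) • γ ^ (q + 1)
        + u • (β * γ)) := by
    simp only [Algebra.smul_def, map_mul]
    rw [pow_succ, hfrob, pow_succ]
    ring
  rw [hf, hf, hexp]
  simp only [map_add, map_smul, hcross, htγ, smul_eq_mul]
  ring
end

section
/- If γ ∈ F_{q^n} is a b-linear translator of f : F_{q^n} → F_q with b ≠ -1, then the map F(x) = x + γ·f(x) is a bijection of F_{q^n}. -/
/-- If `γ` is a `b`-linear translator of `f` with `b ≠ -1`, then `x ↦ x + γ f(x)`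
is a bijection of `F_{q^n}`. -/
theorem stmt_7 {K L : Type*} [Field K] [Fintype K] [Field L] [Fintype L] [Algebra K L]
    (f : L → K) (γ : L) (b : K)
    (hγ0 : γ ≠ 0)
    (hb : ∀ (x : L) (u : K), f (x + u • γ) - f x = u * b)
    (hbne : b ≠ -1) :
    Function.Bijective (fun x : L => x + f x • γ) := by
  apply Finite.injective_iff_bijective.mp
  intro x y h
  simp only at h
  set u : K := f y - f x with hu
  have hx : x = y + u • γ := by
    have : x - y = (f y - f x) • γ := by
      rw [sub_smul]
      linear_combination h
    rw [hu]
    linear_combination this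
  have h2 := hb y u
  rw [← hx] at h2
  have : -u = u * b := by rw [← h2, hu]; ring
  have hu0 : u = 0 := by
    by_contra h0
    apply hbne
    exact mul_left_cancel₀ h0 (by linear_combination -this : u * b = u * (-1))
  rw [hx, hu0, zero_smul, add_zero]
end

section
/- If γ ∈ F_{q^n} is a (-1)-linear translator of f : F_{q^n} → F_q, then the map F(x) = x + γ·f(x) is a q-to-1 mapping: every element of the image of F has exactly q preimages. -/
/-- If `γ` is a `(-1)`-linear translator of `f`, then `F(x) = x + γ f(x)` is a
`q`-to-`1` mapping: every value in the image has exactly `q` preimages. -/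
theorem stmt_8 {K L : Type*} [Field K] [Fintype K] [Field L] [Fintype L] [Algebra K L]
    (f : L → K) (γ : L)
    (hγ0 : γ ≠ 0)
    (hb : ∀ (x : L) (u : K), f (x + u • γ) - f x = u * (-1)) :
    ∀ y : L, y ∈ Set.range (fun x : L => x + f x • γ) →
      Nat.card {x : L // x + f x • γ = y} = Fintype.card K := by
  rintro y ⟨x₀, hx₀⟩
  simp only at hx₀
  have hf : ∀ u : K, f (x₀ + u • γ) = f x₀ - u := by
    intro u
    linear_combination hb x₀ u
  have e : K ≃ {x : L // x + f x • γ = y} := by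
    refine Equiv.ofBijective (fun u => ⟨x₀ + u • γ, ?_⟩) ⟨?_, ?_⟩
    · rw [hf u, sub_smul, ← hx₀]; ring
    · intro u v huv
      have h : x₀ + u • γ = x₀ + v • γ := congrArg Subtype.val huv
      have h2 : u • γ = v • γ := by
        have := add_left_cancel h; exact this
      have : (u - v) • γ = 0 := by rw [sub_smul, h2, sub_self]
      rcases smul_eq_zero.mp this with h' | h'
      · exact sub_eq_zero.mp h'
      · exact absurd h' hγ0
    · rintro ⟨x, hx⟩
      refine ⟨f x₀ - f x, Subtype.ext ?_⟩
      simp only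
      rw [sub_smul]
      have : x + f x • γ = x₀ + f x₀ • γ := by rw [hx, hx₀]
      linear_combination -this
  rw [Nat.card_congr e.symm, Nat.card_eq_fintype_card]
end

section
/- Let q be odd and γ a b-linear translator of f : F_{q^n} → F_q. Then F(x) = x + γ·f(x) is a complete mapping of F_{q^n} (i.e., both F and x ↦ F(x) + x are bijections) if and only if b ∉ {-1, -2}. -/
/-!
For `c ≠ 0` the map `x ↦ c • x + f x • γ` collides only along the line through `γ`:
if `c • x + f x • γ = c • y + f y • γ` then `x = y + u • γ` with `c u = f y - f x = -u b`,
so `u (b + c) = 0`. Hence it is injective exactly when `b ≠ -c`, and a collision at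
`b = -c` is `γ ↦ 0`. The complete-mapping conditions are the cases `c = 1` and `c = 2`,
and `2 ≠ 0` because `q` is odd.
-/

open Function

section LinearTranslator

variable {K V : Type*} [Field K] [AddCommGroup V] [Module K V] {f : V → K} {γ : V} {b : K}

theorem injective_smul_add_smul_iff_ne_neg (hγ : γ ≠ 0)
    (hb : ∀ (x : V) (u : K), f (x + u • γ) - f x = u * b) {c : K} (hc : c ≠ 0) :
    Injective (fun x : V => c • x + f x • γ) ↔ b ≠ -c := by
  constructor
  · rintro hinj rfl
    have hfγ : f γ = f 0 - c := by simpa [sub_eq_iff_eq_add', ← sub_eq_add_neg] using hb 0 1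
    refine hγ (hinj ?_)
    simp only [hfγ, smul_zero, zero_add, sub_smul]
    abel
  · intro hbc x y hxy
    set u := c⁻¹ * (f y - f x)
    have hcu : c * u = f y - f x := by simp only [u, mul_inv_cancel_left₀ hc]
    have hx : x = y + u • γ := by
      apply smul_right_injective V hc
      simp only [smul_add, smul_smul, hcu, sub_smul]
      linear_combination (norm := module) hxy
    have hfx : f x - f y = u * b := by simpa [← hx] using hb y u
    have hu : u * (b + c) = 0 := by linear_combination hcu - hfx
    have hbc' : b + c ≠ 0 := fun h => hbc (eq_neg_of_add_eq_zero_left h)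
    rw [hx, (mul_eq_zero.mp hu).resolve_right hbc', zero_smul, add_zero]

end LinearTranslator

theorem two_ne_zero_of_odd_card {K : Type*} [Field K] [Fintype K]
    (hq : Odd (Fintype.card K)) : (2 : K) ≠ 0 :=
  Ring.two_ne_zero fun h => by
    simpa [Nat.odd_iff.mp hq] using FiniteField.even_card_iff_char_two.mp h

/-- For `q` odd and `γ` a `b`-linear translator of `f`, the map `F(x) = x + γ f(x)`
is a complete mapping iff `b ∉ {-1, -2}`. -/
theorem stmt_11 {K L : Type*} [Field K] [Fintype K] [Field L] [Fintype L] [Algebra K L]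
    (hq : Odd (Fintype.card K))
    (f : L → K) (γ : L) (b : K)
    (hγ0 : γ ≠ 0)
    (hb : ∀ (x : L) (u : K), f (x + u • γ) - f x = u * b) :
    (Function.Bijective (fun x : L => x + f x • γ) ∧
      Function.Bijective (fun x : L => (x + f x • γ) + x)) ↔
      (b ≠ -1 ∧ b ≠ -2) := by
  have hF : (fun x : L => x + f x • γ) = fun x => (1 : K) • x + f x • γ := by
    simp only [one_smul]
  have hFid : (fun x : L => (x + f x • γ) + x) = fun x => (2 : K) • x + f x • γ := by
    funext x
    rw [two_smul]
    abel
  rw [hF, hFid, ← Finite.injective_iff_bijective, ← Finite.injective_iff_bijective,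
    injective_smul_add_smul_iff_ne_neg hγ0 hb one_ne_zero,
    injective_smul_add_smul_iff_ne_neg hγ0 hb (two_ne_zero_of_odd_card hq)]
end

section
/- Let γ be a b-linear translator of f : F_{q^n} → F_q and F(x) = x + γ·f(x). Then for every k ≥ 1, the k-fold composition F_k of F with itself satisfies F_k(x) = x + B_k·γ·f(x), where B_k = 1 + (b+1) + ... + (b+1)^{k-1} ∈ F_q. -/
/-- For `γ` a `b`-linear translator of `f` and `F(x) = x + γ f(x)`, the `k`-fold iterate
satisfies `F^[k](x) = x + B_k γ f(x)` where `B_k = Σ_{i<k} (b+1)^i`. -/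
theorem stmt_12 {K L : Type*} [Field K] [Fintype K] [Field L] [Fintype L] [Algebra K L]
    (f : L → K) (γ : L) (b : K)
    (hγ0 : γ ≠ 0)
    (hb : ∀ (x : L) (u : K), f (x + u • γ) - f x = u * b) :
    ∀ k : ℕ, 1 ≤ k → ∀ x : L,
      (fun x : L => x + f x • γ)^[k] x =
        x + ((∑ i ∈ Finset.range k, (b + 1) ^ i) * f x) • γ := by
  intro k
  induction k with
  | zero => intro h; omega
  | succ n ih =>
    intro _ x
    rcases Nat.eq_zero_or_pos n with hn | hn
    · subst hn; simp
    rw [Function.iterate_succ_apply', ih hn x]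
    have hf : f (x + ((∑ i ∈ Finset.range n, (b + 1) ^ i) * f x) • γ)
        = f x + (∑ i ∈ Finset.range n, (b + 1) ^ i) * f x * b := by
      have := hb x ((∑ i ∈ Finset.range n, (b + 1) ^ i) * f x)
      linear_combination this
    simp only [hf, Finset.sum_range_succ]
    rw [add_assoc, ← add_smul]
    have key := geom_sum_mul (b + 1) n
    congr 2
    linear_combination f x * key
end

section
/- Let γ be a b-linear translator of f : F_{q^n} → F_q with b ≠ -1. Then the inverse of the permutation F(x) = x + γ·f(x) is given by F^{-1}(x) = x - (γ/(b+1))·f(x); that is, G(x) = x - (b+1)^{-1}·γ·f(x) satisfies F(G(x)) = G(F(x)) = x for all x. -/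
/-- For `γ` a `b`-linear translator of `f` with `b ≠ -1`, the inverse of the permutation
`F(x) = x + γ f(x)` is `G(x) = x - (γ/(b+1)) f(x)`. -/
theorem stmt_13 {K L : Type*} [Field K] [Fintype K] [Field L] [Fintype L] [Algebra K L]
    (f : L → K) (γ : L) (b : K)
    (hγ0 : γ ≠ 0)
    (hb : ∀ (x : L) (u : K), f (x + u • γ) - f x = u * b)
    (hbne : b ≠ -1) :
    ∀ x : L,
      ((fun y : L => y + f y • γ) ((fun y : L => y - ((b + 1)⁻¹ * f y) • γ) x) = x) ∧
      ((fun y : L => y - ((b + 1)⁻¹ * f y) • γ) ((fun y : L => y + f y • γ) x) = x) := by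
  have hb1 : b + 1 ≠ 0 := fun h => hbne (by linear_combination h)
  have hf : ∀ (x : L) (u : K), f (x + u • γ) = f x + u * b := by
    intro x u
    linear_combination (hb x u)
  intro x
  constructor
  · show (x - ((b + 1)⁻¹ * f x) • γ) + f (x - ((b + 1)⁻¹ * f x) • γ) • γ = x
    have h1 : x - ((b + 1)⁻¹ * f x) • γ = x + (-((b + 1)⁻¹ * f x)) • γ := by
      rw [neg_smul]; ring
    rw [h1, hf]
    have h2 : f x + -((b + 1)⁻¹ * f x) * b = (b + 1)⁻¹ * f x := by
      field_simp; ring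
    rw [h2]
    module
  · show (x + f x • γ) - ((b + 1)⁻¹ * f (x + f x • γ)) • γ = x
    rw [hf]
    have h2 : (b + 1)⁻¹ * (f x + f x * b) = f x := by
      field_simp; ring
    rw [h2]
    module
end

section
/- Let γ be a 0-linear translator of f : F_{q^n} → F_q and F(x) = x + γ·f(x). Then every x with f(x) ≠ 0 lies in a cycle of F of length exactly p, the characteristic of F_{q^n}, namely the cycle (x, x + γf(x), x + 2γf(x), ..., x + (p-1)γf(x)); and x is a fixed point of F iff f(x) = 0. -/
/-- For `γ` a `0`-linear translator of `f` and `F(x) = x + γ f(x)`: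
`x` is a fixed point iff `f x = 0`, and every `x` with `f x ≠ 0` lies in a cycle of
length exactly `p = char F_{q^n}`, the cycle being `(x, x + γ f x, …, x + (p-1) γ f x)`. -/
theorem stmt_14 {K L : Type*} [Field K] [Fintype K] [Field L] [Fintype L] [Algebra K L]
    (p : ℕ) (hp : p.Prime) [CharP L p]
    (f : L → K) (γ : L)
    (hγ0 : γ ≠ 0)
    (hb : ∀ (x : L) (u : K), f (x + u • γ) = f x) :
    (∀ x : L, (x + f x • γ = x ↔ f x = 0)) ∧
    (∀ x : L, f x ≠ 0 →
      ((fun y : L => y + f y • γ)^[p] x = x ∧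
       (∀ k : ℕ, 0 < k → k < p → (fun y : L => y + f y • γ)^[k] x ≠ x) ∧
       (∀ k : ℕ, k < p →
          (fun y : L => y + f y • γ)^[k] x = x + ((k : K) * f x) • γ))) := by
  haveI : CharP K p := (algebraMap K L).charP (algebraMap K L).injective p
  have fix : ∀ x : L, (x + f x • γ = x ↔ f x = 0) := by
    intro x
    constructor
    · intro h
      have : f x • γ = 0 := by linear_combination h
      rcases smul_eq_zero.mp this with h' | h'
      · exact h'
      · exact absurd h' hγ0
    · intro h; simp [h]
  have iter : ∀ (x : L) (k : ℕ),
      (fun y : L => y + f y • γ)^[k] x = x + ((k : K) * f x) • γ := by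
    intro x k
    induction k with
    | zero => simp
    | succ n ih =>
      rw [Function.iterate_succ_apply', ih]
      rw [hb]
      push_cast
      rw [add_mul, one_mul, add_smul, add_assoc]
  refine ⟨fix, fun x hx => ⟨?_, ?_, fun k _ => iter x k⟩⟩
  · rw [iter]
    rw [CharP.cast_eq_zero K p]; simp
  · intro k hk0 hkp h
    rw [iter] at h
    have : ((k : K) * f x) • γ = 0 := by linear_combination h
    rcases smul_eq_zero.mp this with h' | h'
    · rcases mul_eq_zero.mp h' with h'' | h''
      · have hd := (CharP.cast_eq_zero_iff K p k).mp h''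
        have := Nat.le_of_dvd hk0 hd
        omega
      · exact hx h''
    · exact hγ0 h'
end

section
/- Let γ be a b-linear translator of f : F_{q^n} → F_q with b ≠ 0 and b ≠ -1, and let l be the multiplicative order of b+1 in F_q^*. Then every x with f(x) ≠ 0 lies in a cycle of F(x) = x + γ·f(x) of length exactly l, and the elements of this cycle are x + B_k·γ·f(x) for k = 0, ..., l-1, where B_k = ((b+1)^k - 1)/b. -/
/-- For `γ` a `b`-linear translator of `f` with `b ∉ {0, -1}` and `l` the multiplicative
order of `b+1`, every `x` with `f x ≠ 0` lies in a cycle of `F(x) = x + γ f(x)` of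
length exactly `l`, with elements `x + B_k γ f(x)`, `B_k = ((b+1)^k - 1)/b`. -/
theorem stmt_15 {K L : Type*} [Field K] [Fintype K] [Field L] [Fintype L] [Algebra K L]
    (f : L → K) (γ : L) (b : K)
    (hγ0 : γ ≠ 0)
    (hb : ∀ (x : L) (u : K), f (x + u • γ) - f x = u * b)
    (hb0 : b ≠ 0) (hbne : b ≠ -1) :
    ∀ x : L, f x ≠ 0 →
      ((fun y : L => y + f y • γ)^[orderOf (b + 1)] x = x ∧
       (∀ k : ℕ, 0 < k → k < orderOf (b + 1) → (fun y : L => y + f y • γ)^[k] x ≠ x) ∧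
       (∀ k : ℕ, k < orderOf (b + 1) →
          (fun y : L => y + f y • γ)^[k] x = x + ((((b + 1) ^ k - 1) / b) * f x) • γ)) := by
  intro x hfx
  have hb1 : b + 1 ≠ 0 := by
    intro h
    apply hbne
    linear_combination h
  have key : ∀ k : ℕ, (fun y : L => y + f y • γ)^[k] x
      = x + ((((b + 1) ^ k - 1) / b) * f x) • γ := by
    intro k
    induction k with
    | zero => simp
    | succ k ih =>
      rw [Function.iterate_succ_apply', ih]
      have hf : f (x + ((((b + 1) ^ k - 1) / b) * f x) • γ)
          = f x + (((b + 1) ^ k - 1) / b) * f x * b := by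
        linear_combination hb x ((((b + 1) ^ k - 1) / b) * f x)
      simp only [hf]
      rw [add_assoc, ← add_smul]
      congr 1
      field_simp
      ring
  have hfin : IsOfFinOrder (b + 1) := by
    have : (b + 1) ^ (Fintype.card K - 1) = 1 := FiniteField.pow_card_sub_one_eq_one _ hb1
    exact isOfFinOrder_iff_pow_eq_one.mpr
      ⟨Fintype.card K - 1, by have := Fintype.one_lt_card (α := K); omega, this⟩
  refine ⟨?_, ?_, fun k _ => key k⟩
  · rw [key, pow_orderOf_eq_one (b + 1)]
    simp
  · intro k hk0 hkl hcyc
    rw [key] at hcyc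
    have h0 : ((((b + 1) ^ k - 1) / b) * f x) • γ = 0 := add_eq_left.mp hcyc
    rcases smul_eq_zero.mp h0 with h | h
    · have hB : (b + 1) ^ k = 1 := by
        rcases mul_eq_zero.mp h with h1 | h1
        · field_simp at h1
          linear_combination h1
        · exact absurd h1 hfx
      exact absurd (orderOf_le_of_pow_eq_one hk0 hB) (by omega)
    · exact hγ0 h
end

section
/- Let L : F_{q^n} → F_{q^n} be an F_q-linear bijection and γ a b-linear translator of f : F_{q^n} → F_q. Then F(x) = L(x) + L(γ)·f(x) is a permutation of F_{q^n} if b ≠ -1, and is a q-to-1 map if b = -1. -/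
/-- For an `F_q`-linear bijection `T` of `F_{q^n}` and `γ` a `b`-linear translator of `f`,
the map `F(x) = T(x) + T(γ) f(x)` is a permutation if `b ≠ -1` and is `q`-to-`1`
if `b = -1`. -/
theorem stmt_16 {K L : Type*} [Field K] [Fintype K] [Field L] [Fintype L] [Algebra K L]
    (T : L →ₗ[K] L) (hT : Function.Bijective T)
    (f : L → K) (γ : L) (b : K)
    (hγ0 : γ ≠ 0)
    (hb : ∀ (x : L) (u : K), f (x + u • γ) - f x = u * b) :
    (b ≠ -1 → Function.Bijective (fun x : L => T x + f x • T γ)) ∧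
    (b = -1 → ∀ y : L, y ∈ Set.range (fun x : L => T x + f x • T γ) →
      Nat.card {x : L // T x + f x • T γ = y} = Fintype.card K) := by
  have hF : ∀ x : L, T x + f x • T γ = T (x + f x • γ) := by
    intro x; rw [map_add, map_smul]
  -- if G x = G y then x = y + (f y - f x) • γ
  have key : ∀ x y : L, x + f x • γ = y + f y • γ → x = y + (f y - f x) • γ := by
    intro x y h
    have h1 : x = y + f y • γ - f x • γ := by rw [← h]; abel
    rw [sub_smul]
    exact h1.trans (by abel)
  constructor
  · intro hbne
    rw [Fintype.bijective_iff_injective_and_card]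
    refine ⟨?_, rfl⟩
    intro x y hxy
    simp only [hF] at hxy
    have hG : x + f x • γ = y + f y • γ := hT.injective hxy
    have hx : x = y + (f y - f x) • γ := key x y hG
    have h1 : f (y + (f y - f x) • γ) - f y = (f y - f x) * b := hb y (f y - f x)
    rw [← hx] at h1
    have h3 : (f y - f x) * (b + 1) = 0 := by linear_combination -h1
    have h4 : f y - f x = 0 := by
      rcases mul_eq_zero.mp h3 with h | h
      · exact h
      · exact absurd (by linear_combination h) hbne
    rw [hx, h4, zero_smul, add_zero]
  · intro hbeq y hy
    obtain ⟨x0, hx0⟩ := hy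
    simp only at hx0
    have hfshift : ∀ u : K, f (x0 + u • γ) = f x0 - u := by
      intro u
      have := hb x0 u
      rw [hbeq] at this
      linear_combination this
    have e : K ≃ {x : L // T x + f x • T γ = y} := by
      refine Equiv.ofBijective (fun u => ⟨x0 + u • γ, ?_⟩) ⟨?_, ?_⟩
      · rw [hF, hfshift u, ← hx0, hF]
        congr 1
        rw [sub_smul]; abel
      · intro u v huv
        have h := Subtype.mk_eq_mk.mp huv
        have h0 : (u - v) • γ = (x0 + u • γ) - (x0 + v • γ) := by rw [sub_smul]; abel
        rw [h, sub_self] at h0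
        rcases smul_eq_zero.mp h0 with h' | h'
        · exact sub_eq_zero.mp h'
        · exact absurd h' hγ0
      · rintro ⟨x, hx⟩
        refine ⟨f x0 - f x, ?_⟩
        have hG : x + f x • γ = x0 + f x0 • γ := by
          apply hT.injective
          rw [← hF, ← hF, hx, hx0]
        exact Subtype.ext (key x x0 hG).symm
    rw [Nat.card_congr e.symm, Nat.card_eq_fintype_card]
end

section
/- Suppose γ, δ ∈ F_{q^n}, γ is a b₁-linear translator of f and a b₂-linear translator of g, and δ is a d₁-linear translator of f and a d₂-linear translator of g (f, g : F_{q^n} → F_q). If b₁ ≠ -1 and d₂ - d₁b₂/(b₁+1) ≠ -1, then F(x) = x + γ·f(x) + δ·g(x) is a permutation of F_{q^n}. -/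
/-- If `γ` is a `b₁`- (resp. `b₂`-) linear translator of `f` (resp. `g`), `δ` is a
`d₁`- (resp. `d₂`-) linear translator of `f` (resp. `g`), `b₁ ≠ -1`, and
`d₂ - d₁ b₂ / (b₁ + 1) ≠ -1`, then `F(x) = x + γ f(x) + δ g(x)` is a permutation. -/
theorem stmt_17 {K L : Type*} [Field K] [Fintype K] [Field L] [Fintype L] [Algebra K L]
    (f g : L → K) (γ δ : L) (b₁ b₂ d₁ d₂ : K)
    (hγ0 : γ ≠ 0) (hδ0 : δ ≠ 0)
    (hγf : ∀ (x : L) (u : K), f (x + u • γ) - f x = u * b₁)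
    (hγg : ∀ (x : L) (u : K), g (x + u • γ) - g x = u * b₂)
    (hδf : ∀ (x : L) (u : K), f (x + u • δ) - f x = u * d₁)
    (hδg : ∀ (x : L) (u : K), g (x + u • δ) - g x = u * d₂)
    (hb₁ : b₁ ≠ -1)
    (hcond : d₂ - d₁ * b₂ / (b₁ + 1) ≠ -1) :
    Function.Bijective (fun x : L => x + f x • γ + g x • δ) := by
  have hb : b₁ + 1 ≠ 0 := fun h => hb₁ (by linear_combination h)
  have hc : (1 + d₂) * (1 + b₁) - d₁ * b₂ ≠ 0 := by
    intro h
    apply hcond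
    have h2 : d₁ * b₂ / (b₁ + 1) = 1 + d₂ := by
      rw [div_eq_iff hb]; linear_combination -h
    rw [h2]; ring
  refine Finite.injective_iff_bijective.mp ?_
  intro x y hxy
  simp only at hxy
  set u := f x - f y with hu
  set v := g x - g y with hv
  have hy : y = x + u • γ + v • δ := by
    rw [hu, hv, sub_smul, sub_smul]
    linear_combination (norm := module) -hxy
  have hf : f y = f x + u * b₁ + v * d₁ := by
    have h1 := hγf x u
    have h2 := hδf (x + u • γ) v
    rw [hy]
    linear_combination h1 + h2
  have hg : g y = g x + u * b₂ + v * d₂ := by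
    have h1 := hγg x u
    have h2 := hδg (x + u • γ) v
    rw [hy]
    linear_combination h1 + h2
  have e1 : u * (1 + b₁) + v * d₁ = 0 := by linear_combination hu - hf
  have e2 : v * (1 + d₂) + u * b₂ = 0 := by linear_combination hv - hg
  have e3 : v * ((1 + d₂) * (1 + b₁) - d₁ * b₂) = 0 := by
    linear_combination (1 + b₁) * e2 - b₂ * e1
  have hv0 : v = 0 := by
    rcases mul_eq_zero.mp e3 with h | h
    · exact h
    · exact absurd h hc
  have hu0 : u = 0 := by
    have : u * (1 + b₁) = 0 := by linear_combination e1 - d₁ * hv0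
    rcases mul_eq_zero.mp this with h | h
    · exact h
    · exact absurd h (fun h => hb (by linear_combination h))
  rw [hy, hu0, hv0]
  simp
end

section
/- Let γ be a b-linear translator of f : F_{q^n} → F_q and h : F_q → F_q. Then F(x) = x + γ·h(f(x)) is a permutation of F_{q^n} if and only if g(u) = b·h(u) + u is a permutation of F_q. -/
/-!
`F` moves each point `x` along the line `x + K γ`, and the translator identity gives
`f ∘ F = g ∘ f`. So `F` is injective or surjective as soon as `g` is, the correction
`h (f x) • γ` being recovered from `f x`. Conversely, for `b ≠ 0` the map `f` is an affine
bijection on every such line, so two points of `K` with the same image under `g` lift to two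
points on one line with the same image under `F`.
-/

def IsLinearTranslator {K L : Type*} [Ring K] [AddCommGroup L] [Module K L]
    (f : L → K) (γ : L) (b : K) : Prop :=
  ∀ (x : L) (u : K), f (x + u • γ) - f x = u * b

namespace IsLinearTranslator

section CommRing

variable {K L : Type*} [CommRing K] [AddCommGroup L] [Module K L]
  {f : L → K} {γ : L} {b : K}

theorem map_add_smul (hf : IsLinearTranslator f γ b) (x : L) (u : K) :
    f (x + u • γ) = f x + u * b :=
  sub_eq_iff_eq_add'.mp (hf x u)

theorem semiconj (hf : IsLinearTranslator f γ b) (h : K → K) :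
    Function.Semiconj f (fun x => x + h (f x) • γ) (fun u => b * h u + u) := fun x => by
  rw [hf.map_add_smul, mul_comm, add_comm]

theorem injective_add_smul (hf : IsLinearTranslator f γ b) {h : K → K}
    (hg : Function.Injective fun u => b * h u + u) :
    Function.Injective fun x => x + h (f x) • γ := by
  intro x y hxy
  have hfxy : f x = f y := hg (by simpa only [(hf.semiconj h).eq] using congrArg f hxy)
  simpa only [hfxy, add_left_inj] using hxy

theorem surjective_add_smul (hf : IsLinearTranslator f γ b) {h : K → K}
    (hg : Function.Surjective fun u => b * h u + u) :
    Function.Surjective fun x => x + h (f x) • γ := by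
  intro y
  obtain ⟨u, hu⟩ := hg (f y)
  have hfu : f (y + (-h u) • γ) = u := by
    rw [hf.map_add_smul, ← hu]
    ring
  refine ⟨y + (-h u) • γ, ?_⟩
  dsimp only
  rw [hfu, neg_smul, neg_add_cancel_right]

end CommRing

section Field

variable {K L : Type*} [Field K] [AddCommGroup L] [Module K L]
  {f : L → K} {γ : L} {b : K}

theorem map_add_smul_div_sub (hf : IsLinearTranslator f γ b) (hb : b ≠ 0) (x : L) (u : K) :
    f (x + ((u - f x) / b) • γ) = u := by
  rw [hf.map_add_smul, div_mul_cancel₀ _ hb, add_sub_cancel]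

theorem surjective (hf : IsLinearTranslator f γ b) (hb : b ≠ 0) : Function.Surjective f :=
  fun u => ⟨_, hf.map_add_smul_div_sub hb 0 u⟩

theorem surjective_mul_add (hf : IsLinearTranslator f γ b) (hb : b ≠ 0) {h : K → K}
    (hF : Function.Surjective fun x => x + h (f x) • γ) :
    Function.Surjective fun u => b * h u + u :=
  Function.Surjective.of_comp <| (hf.semiconj h).comp_eq ▸ (hf.surjective hb).comp hF

theorem injective_mul_add (hf : IsLinearTranslator f γ b) (hγ : γ ≠ 0) (hb : b ≠ 0)
    {h : K → K} (hF : Function.Injective fun x => x + h (f x) • γ) :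
    Function.Injective fun u => b * h u + u := by
  intro u₁ u₂ hg
  obtain ⟨x, rfl⟩ := hf.surjective hb u₁
  set y := x + (h (f x) - h u₂) • γ
  have hfy : f y = u₂ := by
    simp only [y, hf.map_add_smul]
    linear_combination hg
  have hxy : x = y := hF <| by
    simp only [hfy, y, add_assoc, ← add_smul, sub_add_cancel]
  have hh : h (f x) = h u₂ := by
    rwa [left_eq_add, smul_eq_zero, sub_eq_zero, or_iff_left hγ] at hxy
  simpa only [hh, add_right_inj] using hg

end Field

end IsLinearTranslator

theorem stmt_18_general {K L : Type*} [Field K] [Field L] [Algebra K L]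
    (f : L → K) (γ : L) (b : K) (h : K → K)
    (hγ0 : γ ≠ 0)
    (hb : ∀ (x : L) (u : K), f (x + u • γ) - f x = u * b) :
    Function.Bijective (fun x : L => x + h (f x) • γ) ↔
      Function.Bijective (fun u : K => b * h u + u) := by
  have hf : IsLinearTranslator f γ b := hb
  refine ⟨fun hF => ?_, fun hg =>
    ⟨hf.injective_add_smul hg.1, hf.surjective_add_smul hg.2⟩⟩
  rcases eq_or_ne b 0 with rfl | hb0
  · simp only [zero_mul, zero_add]
    exact Function.bijective_id
  · exact ⟨hf.injective_mul_add hγ0 hb0 hF.1, hf.surjective_mul_add hb0 hF.2⟩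

/-- For `γ` a `b`-linear translator of `f` and `h : F_q → F_q`, the map
`F(x) = x + γ h(f(x))` permutes `F_{q^n}` iff `g(u) = b h(u) + u` permutes `F_q`. -/
theorem stmt_18 {K L : Type*} [Field K] [Fintype K] [Field L] [Fintype L] [Algebra K L]
    (f : L → K) (γ : L) (b : K) (h : K → K)
    (hγ0 : γ ≠ 0)
    (hb : ∀ (x : L) (u : K), f (x + u • γ) - f x = u * b) :
    Function.Bijective (fun x : L => x + h (f x) • γ) ↔
      Function.Bijective (fun u : K => b * h u + u) :=
  stmt_18_general f γ b h hγ0 hb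
end
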